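/- Let 𝓑 be a connected building set on a finite ground set S that is closed under intersection, and for B ⊆ S let ȳ_B be the number of unordered pairs {s, t} of elements of S (allowing s = t) with π(s,t) = B. Then the removahedron of 𝓑 coincides with the Minkowski sum of dilated faces of the standard simplex with these coefficients: Remo(𝓑) = Σ_{B ∈ 𝓑} ȳ_B · Δ_B, as an equality of subsets of ℝ^S. -/

import Mathlib

open Pointwise

/-- `𝓑` is a building set on the finite ground set `V`: a collection of
nonempty subsets of `V` such that (B1) the union of two intersecting elements
is again an element, and (B2) all singletons are elements. -/
def IsBuilding {V : Type*} [DecidableEq V] (𝓑 : Set (Finset V)) : Prop :=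
  (∀ B ∈ 𝓑, B.Nonempty) ∧
  (∀ B ∈ 𝓑, ∀ B' ∈ 𝓑, (B ∩ B').Nonempty → B ∪ B' ∈ 𝓑) ∧
  (∀ s : V, ({s} : Finset V) ∈ 𝓑)

/-- `P` is the `𝓑`-path `π(s,t)`: the inclusion-smallest element of `𝓑`
containing both `s` and `t`. -/
def IsMinPath {V : Type*} (𝓑 : Set (Finset V)) (s t : V) (P : Finset V) : Prop :=
  P ∈ 𝓑 ∧ s ∈ P ∧ t ∈ P ∧ ∀ B ∈ 𝓑, s ∈ B → t ∈ B → P ⊆ B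

/-- The dilation coefficient `ȳ_B`: the number of unordered pairs `{s, t}` of
elements of the ground set (allowing `s = t`) whose `𝓑`-path `π(s,t)` equals
`B`. -/
noncomputable def ybar {V : Type*} (𝓑 : Set (Finset V)) (B : Finset V) : ℕ :=
  Set.ncard {z : Sym2 V | ∃ s t : V, z = Sym2.mk s t ∧ IsMinPath 𝓑 s t B}

/-- The face `Δ_T = conv{e_t : t ∈ T}` of the standard simplex in `ℝ^V`. -/
noncomputable def simplexFace {V : Type*} [DecidableEq V] (T : Finset V) :
    Set (V → ℝ) :=
  convexHull ℝ {x : V → ℝ | ∃ t ∈ T, x = Pi.single t 1}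

/-- The removahedron of `𝓑`: the points of the hyperplane
`Σ_s x_s = C(|V|+1, 2)` satisfying `Σ_{b ∈ B} x_b ≥ C(|B|+1, 2)` for all
`B ∈ 𝓑`. -/
def Remo {V : Type*} [Fintype V] (𝓑 : Set (Finset V)) : Set (V → ℝ) :=
  {x : V → ℝ | (∑ s : V, x s) = ((Fintype.card V + 1).choose 2 : ℝ) ∧
    ∀ B ∈ 𝓑, ((B.card + 1).choose 2 : ℝ) ≤ ∑ b ∈ B, x b}

/-!
Write `g(T) = ∑_{B ∈ 𝓣, B ⊆ T} y_B`. For `y ≥ 0` the Minkowski sum `∑_B y_B Δ_B` is the base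
polytope `{x : x(V) = g(V), x(T) ≥ g(T) for all T}` of the supermodular function `g`. The inclusion
`⊆` holds summand by summand, since `y_B Δ_B` lies in the base polytope of `T ↦ y_B [B ⊆ T]` and
points of base polytopes add. For `⊇` it suffices, by Krein–Milman, to decompose an extreme point
`x`: the minimal tight sets `M s ∋ s` of `x` are pairwise distinct (otherwise `x` could be moved
along `e_s - e_t`), so `x_s = g(M s) - g(M s \ {s}) = ∑_{s ∈ B ⊆ M s} y_B`, every `B` is charged to
at most one of its elements, and comparing totals shows that it is charged to exactly one when
`y_B ≠ 0`.

For `y = ȳ`, `g(T)` counts the pairs `{s, t}` with `π(s,t) ⊆ T`. This is `C(|B|+1, 2)` when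
`T = B ∈ 𝓑`, and at most `∑ C(|C|+1, 2)` over the maximal members `C` of `𝓑` inside `T`, which
partition `T` by (B1) and (B2). So `Remo(𝓑)` is the base polytope of `g`.
-/

open Finset

section BasePolytope

variable {V : Type*} [Fintype V]

def basePolytope (g : Finset V → ℝ) : Set (V → ℝ) :=
  {x | ∑ s, x s = g univ ∧ ∀ T, g T ≤ ∑ t ∈ T, x t}

lemma convex_basePolytope (g : Finset V → ℝ) : Convex ℝ (basePolytope g) := by
  have hlin (T : Finset V) : IsLinearMap ℝ fun x : V → ℝ => ∑ t ∈ T, x t :=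
    ⟨fun x y => sum_add_distrib, fun c x => by simp [mul_sum]⟩
  simp only [basePolytope, Set.ofPred_and, Set.ofPred_forall]
  exact (convex_hyperplane (hlin univ) _).inter
    (convex_iInter fun T => convex_halfSpace_ge (hlin T) _)

lemma isCompact_basePolytope [DecidableEq V] (g : Finset V → ℝ) :
    IsCompact (basePolytope g) := by
  have hclosed : IsClosed (basePolytope g) := by
    simp only [basePolytope, Set.ofPred_and, Set.ofPred_forall]
    exact (isClosed_eq (by fun_prop) continuous_const).inter
      (isClosed_iInter fun T => isClosed_le continuous_const (by fun_prop))
  refine (isCompact_Icc (a := fun s => g {s}) (b := fun s => g univ - g (univ.erase s)))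
    |>.of_isClosed_subset hclosed fun x hx => ⟨fun s => by simpa using hx.2 {s}, fun s => ?_⟩
  have := sum_erase_add univ x (mem_univ s)
  have := hx.2 (univ.erase s)
  show x s ≤ g univ - g (univ.erase s)
  linarith [hx.1]

lemma sum_mem_basePolytope {ι : Type*} (I : Finset ι) (g : ι → Finset V → ℝ) (x : ι → V → ℝ)
    (hx : ∀ i ∈ I, x i ∈ basePolytope (g i)) :
    ∑ i ∈ I, x i ∈ basePolytope (∑ i ∈ I, g i) := by
  refine ⟨?_, fun T => ?_⟩
  · simp only [Finset.sum_apply]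
    rw [sum_comm]
    exact sum_congr rfl fun i hi => (hx i hi).1
  · simp only [Finset.sum_apply]
    rw [sum_comm]
    exact sum_le_sum fun i hi => (hx i hi).2 T

end BasePolytope

section SimplexFace

variable {V : Type*} [DecidableEq V]

lemma isCompact_simplexFace (B : Finset V) : IsCompact (simplexFace B) := by
  have hfin : {x : V → ℝ | ∃ t ∈ B, x = Pi.single t 1}.Finite :=
    (B.finite_toSet.image fun t => Pi.single t 1).subset
      (by rintro _ ⟨t, ht, rfl⟩; exact ⟨t, ht, rfl⟩)
  exact hfin.isCompact_convexHull ℝ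

lemma isCompact_sum_smul_simplexFace (𝓣 : Finset (Finset V)) (y : Finset V → ℝ) :
    IsCompact (∑ B ∈ 𝓣, y B • simplexFace B) :=
  sum_induction _ IsCompact (fun _ _ h₁ h₂ => h₁.add h₂) isCompact_singleton
    fun B _ => (isCompact_simplexFace B).smul (y B)

end SimplexFace

section SubsetWeight

variable {V : Type*} [DecidableEq V] (𝓣 : Finset (Finset V)) (y : Finset V → ℝ)

def subsetWeight (T : Finset V) : ℝ :=
  ∑ B ∈ 𝓣 with B ⊆ T, y B

lemma subsetWeight_eq_sum_ite :
    subsetWeight 𝓣 y = ∑ B ∈ 𝓣, fun T => if B ⊆ T then y B else 0 := by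
  ext T
  simp [subsetWeight, sum_filter, Finset.sum_apply]

lemma subsetWeight_empty (h𝓣 : ∀ B ∈ 𝓣, B.Nonempty) : subsetWeight 𝓣 y ∅ = 0 :=
  sum_eq_zero fun B hB => by
    simp only [mem_filter, subset_empty] at hB
    exact absurd hB.2 (h𝓣 B hB.1).ne_empty

def IsSupermodular (g : Finset V → ℝ) : Prop :=
  ∀ T U, g T + g U ≤ g (T ∪ U) + g (T ∩ U)

variable {𝓣 y}

lemma subsetWeight_supermodular (hy : ∀ B ∈ 𝓣, 0 ≤ y B) : IsSupermodular (subsetWeight 𝓣 y) := by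
  intro T U
  simp only [subsetWeight, sum_filter, ← sum_add_distrib]
  refine sum_le_sum fun B hB => ?_
  have := hy B hB
  have hT' (h : B ⊆ T) : B ⊆ T ∪ U := h.trans subset_union_left
  have hU' (h : B ⊆ U) : B ⊆ T ∪ U := h.trans subset_union_right
  split_ifs <;> simp_all [subset_inter_iff]

variable (𝓣 y)

lemma subsetWeight_sub_subsetWeight_erase (s : V) (T : Finset V) :
    subsetWeight 𝓣 y T - subsetWeight 𝓣 y (T.erase s) = ∑ B ∈ 𝓣 with s ∈ B ∧ B ⊆ T, y B := by
  simp only [subsetWeight, sum_filter, ← sum_sub_distrib]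
  refine sum_congr rfl fun B _ => ?_
  by_cases hs : s ∈ B <;> by_cases hT : B ⊆ T <;> simp [hs, hT, subset_erase]

end SubsetWeight

section Minkowski

variable {V : Type*} [Fintype V] [DecidableEq V]

lemma smul_simplexFace_subset_basePolytope {c : ℝ} (hc : 0 ≤ c) (B : Finset V) :
    c • simplexFace B ⊆ basePolytope fun T => if B ⊆ T then c else 0 := by
  rw [simplexFace, ← convexHull_smul]
  refine convexHull_min ?_ (convex_basePolytope _)
  rintro _ ⟨_, ⟨t, ht, rfl⟩, rfl⟩
  refine ⟨by simp [← mul_sum], fun T => ?_⟩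
  simp only [Pi.smul_apply, smul_eq_mul, ← mul_sum, sum_pi_single', mul_ite, mul_one, mul_zero]
  split_ifs with hBT htT <;> first | rfl | exact hc | exact absurd (hBT ht) htT

variable {𝓣 : Finset (Finset V)} {y : Finset V → ℝ}

lemma sum_smul_simplexFace_subset_basePolytope (hy : ∀ B ∈ 𝓣, 0 ≤ y B) :
    ∑ B ∈ 𝓣, y B • simplexFace B ⊆ basePolytope (subsetWeight 𝓣 y) := by
  intro x hx
  obtain ⟨f, hf, rfl⟩ := (Set.mem_finsetSum _ _ _).1 hx
  rw [subsetWeight_eq_sum_ite]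
  exact sum_mem_basePolytope 𝓣 _ f fun B hB =>
    smul_simplexFace_subset_basePolytope (hy B hB) B (hf hB)

end Minkowski

section TightSets

variable {V : Type*}

def IsTight (g : Finset V → ℝ) (x : V → ℝ) (T : Finset V) : Prop :=
  ∑ t ∈ T, x t = g T

variable [Fintype V] [DecidableEq V] {g : Finset V → ℝ} {x : V → ℝ}

lemma IsTight.inter_union (hg : IsSupermodular g) (hx : x ∈ basePolytope g) {T U : Finset V}
    (hT : IsTight g x T) (hU : IsTight g x U) :
    IsTight g x (T ∩ U) ∧ IsTight g x (T ∪ U) := by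
  have := sum_union_inter (s₁ := T) (s₂ := U) (f := x)
  have := hx.2 (T ∩ U)
  have := hx.2 (T ∪ U)
  have := hg T U
  unfold IsTight at *
  constructor <;> linarith

variable (g x) in
open Classical in
noncomputable def minTight (s : V) : Finset V :=
  (univ.filter fun T => s ∈ T ∧ IsTight g x T).inf id

lemma mem_minTight_and_isTight (hg : IsSupermodular g) (hx : x ∈ basePolytope g) (s : V) :
    s ∈ minTight g x s ∧ IsTight g x (minTight g x s) := by
  classical
  exact inf_mem {T | s ∈ T ∧ IsTight g x T} ⟨mem_univ s, hx.1⟩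
    (fun T hT U hU => ⟨mem_inter.2 ⟨hT.1, hU.1⟩, (hT.2.inter_union hg hx hU.2).1⟩) _ _
    fun T hT => (mem_filter.1 hT).2

lemma minTight_subset {s : V} {T : Finset V} (hs : s ∈ T) (hT : IsTight g x T) :
    minTight g x s ⊆ T := by
  classical
  exact inf_le (mem_filter.2 ⟨mem_univ _, hs, hT⟩)

lemma add_single_sub_single_mem_basePolytope (hx : x ∈ basePolytope g) {ε : ℝ} (hε₀ : 0 ≤ ε)
    (hε : ∀ T, ¬ IsTight g x T → ε ≤ ∑ t ∈ T, x t - g T) {s t : V}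
    (hst : ∀ T, IsTight g x T → (s ∈ T ↔ t ∈ T)) :
    x + (Pi.single s ε - Pi.single t ε) ∈ basePolytope g := by
  refine ⟨by simp [sum_add_distrib, sum_sub_distrib, hx.1], fun T => ?_⟩
  simp only [Pi.add_apply, Pi.sub_apply, sum_add_distrib, sum_sub_distrib, sum_pi_single']
  have := hx.2 T
  by_cases hT : IsTight g x T
  · have := hst T hT
    split_ifs <;> simp_all
  · have := hε T hT
    split_ifs <;> linarith

lemma eq_of_forall_isTight_mem_iff (hx : x ∈ (basePolytope g).extremePoints ℝ) {s t : V}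
    (hst : ∀ T, IsTight g x T → (s ∈ T ↔ t ∈ T)) : s = t := by
  classical
  by_contra hne
  -- tight sets get slack `1` only so that the least slack `slack T₀` is positive
  let slack T := if IsTight g x T then 1 else ∑ t ∈ T, x t - g T
  have hpos T : 0 < slack T := by
    by_cases hT : IsTight g x T
    · simp [slack, hT]
    · simpa [slack, hT] using lt_of_le_of_ne (hx.1.2 T) (Ne.symm hT)
  obtain ⟨T₀, hT₀⟩ := Finite.exists_min slack
  have hε T (hT : ¬ IsTight g x T) : slack T₀ ≤ ∑ t ∈ T, x t - g T := by
    simpa [slack, hT] using hT₀ T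
  have h₁ := add_single_sub_single_mem_basePolytope hx.1 (hpos T₀).le hε hst
  have h₂ := add_single_sub_single_mem_basePolytope hx.1 (hpos T₀).le hε fun T hT => (hst T hT).symm
  have hseg : x ∈ openSegment ℝ (x + (Pi.single s (slack T₀) - Pi.single t (slack T₀)))
      (x + (Pi.single t (slack T₀) - Pi.single s (slack T₀))) :=
    ⟨1 / 2, 1 / 2, by norm_num, by norm_num, by norm_num, by ext; simp; ring⟩
  have := congr_fun (hx.2 h₁ h₂ hseg) s
  simp [hne] at this
  exact (hpos T₀).ne' this

lemma minTight_injective (hg : IsSupermodular g) (hx : x ∈ (basePolytope g).extremePoints ℝ) :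
    Function.Injective (minTight g x) := by
  intro s t hst
  have hs := (mem_minTight_and_isTight hg hx.1 s).1
  have ht := (mem_minTight_and_isTight hg hx.1 t).1
  refine eq_of_forall_isTight_mem_iff hx fun T hT => ⟨fun hsT => ?_, fun htT => ?_⟩
  · exact minTight_subset hsT hT (hst ▸ ht)
  · exact minTight_subset htT hT (hst ▸ hs)

lemma eq_of_mem_minTight_of_mem_minTight (hg : IsSupermodular g)
    (hx : x ∈ (basePolytope g).extremePoints ℝ) {s t : V} (hs : s ∈ minTight g x t)
    (ht : t ∈ minTight g x s) : s = t :=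
  minTight_injective hg hx <| subset_antisymm
    (minTight_subset hs (mem_minTight_and_isTight hg hx.1 t).2)
    (minTight_subset ht (mem_minTight_and_isTight hg hx.1 s).2)

lemma isTight_minTight_erase (hg : IsSupermodular g) (hg₀ : g ∅ = 0)
    (hx : x ∈ (basePolytope g).extremePoints ℝ) (s : V) :
    IsTight g x ((minTight g x s).erase s) := by
  have hM t := mem_minTight_and_isTight hg hx.1 t
  have hcover : ((minTight g x s).erase s).sup (minTight g x) = (minTight g x s).erase s := by
    refine le_antisymm (Finset.sup_le fun t ht => ?_) fun t ht => mem_sup.2 ⟨t, ht, (hM t).1⟩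
    obtain ⟨hts, htM⟩ := mem_erase.1 ht
    have hsub : minTight g x t ⊆ minTight g x s := minTight_subset htM (hM s).2
    exact subset_erase.2 ⟨hsub, fun hs => hts (eq_of_mem_minTight_of_mem_minTight hg hx htM hs)⟩
  rw [← hcover]
  exact sup_mem {T | IsTight g x T} (by simp [IsTight, hg₀])
    (fun T hT U hU => (IsTight.inter_union hg hx.1 hT hU).2) _ _ fun t _ => (hM t).2

lemma apply_eq_sub_of_mem_extremePoints (hg : IsSupermodular g) (hg₀ : g ∅ = 0)
    (hx : x ∈ (basePolytope g).extremePoints ℝ) (s : V) :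
    x s = g (minTight g x s) - g ((minTight g x s).erase s) := by
  have := sum_erase_add _ x (mem_minTight_and_isTight hg hx.1 s).1
  have := (mem_minTight_and_isTight hg hx.1 s).2
  have := isTight_minTight_erase hg hg₀ hx s
  unfold IsTight at *
  linarith

end TightSets

section ExtremePoints

variable {V : Type*} [Fintype V] [DecidableEq V] {𝓣 : Finset (Finset V)} {y : Finset V → ℝ}
  {x : V → ℝ}

lemma apply_eq_sum_of_mem_extremePoints (hy : ∀ B ∈ 𝓣, 0 ≤ y B) (h𝓣 : ∀ B ∈ 𝓣, B.Nonempty)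
    (hx : x ∈ (basePolytope (subsetWeight 𝓣 y)).extremePoints ℝ) (s : V) :
    x s = ∑ B ∈ 𝓣, if s ∈ B ∧ B ⊆ minTight (subsetWeight 𝓣 y) x s then y B else 0 := by
  rw [apply_eq_sub_of_mem_extremePoints (subsetWeight_supermodular hy)
    (subsetWeight_empty 𝓣 y h𝓣) hx, subsetWeight_sub_subsetWeight_erase, sum_filter]

lemma exists_subset_minTight_of_ne_zero (hy : ∀ B ∈ 𝓣, 0 ≤ y B) (h𝓣 : ∀ B ∈ 𝓣, B.Nonempty)
    (hx : x ∈ (basePolytope (subsetWeight 𝓣 y)).extremePoints ℝ) {B : Finset V} (hB : B ∈ 𝓣)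
    (hyB : y B ≠ 0) : ∃ s ∈ B, B ⊆ minTight (subsetWeight 𝓣 y) x s := by
  set M := minTight (subsetWeight 𝓣 y) x
  let tags B := univ.filter fun s => s ∈ B ∧ B ⊆ M s
  have htags_le B : #(tags B) ≤ 1 := card_le_one.2 fun s hs t ht => by
    simp only [tags, mem_filter] at hs ht
    exact eq_of_mem_minTight_of_mem_minTight (subsetWeight_supermodular hy) hx
      (ht.2.2 hs.2.1) (hs.2.2 ht.2.1)
  have hle : ∀ B ∈ 𝓣, y B * #(tags B) ≤ y B := fun B hB =>
    mul_le_of_le_one_right (hy B hB) (by exact_mod_cast htags_le B)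
  have hsum : ∑ B ∈ 𝓣, y B * #(tags B) = ∑ B ∈ 𝓣, y B := calc
    ∑ B ∈ 𝓣, y B * #(tags B) = ∑ s, x s := by
      simp only [apply_eq_sum_of_mem_extremePoints hy h𝓣 hx]
      rw [sum_comm]
      refine sum_congr rfl fun B _ => ?_
      rw [← sum_filter, sum_const, nsmul_eq_mul, mul_comm]
    _ = ∑ B ∈ 𝓣, y B := by simp [hx.1.1, subsetWeight]
  have hone : (#(tags B) : ℝ) = 1 := (mul_eq_left₀ hyB).1 ((sum_eq_sum_iff_of_le hle).1 hsum B hB)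
  obtain ⟨s, hs⟩ := card_pos.1 (by rw [← Nat.cast_pos (α := ℝ), hone]; exact one_pos)
  simp only [tags, mem_filter] at hs
  exact ⟨s, hs.2⟩

lemma mem_sum_smul_simplexFace_of_mem_extremePoints (hy : ∀ B ∈ 𝓣, 0 ≤ y B)
    (h𝓣 : ∀ B ∈ 𝓣, B.Nonempty) (hx : x ∈ (basePolytope (subsetWeight 𝓣 y)).extremePoints ℝ) :
    x ∈ ∑ B ∈ 𝓣, y B • simplexFace B := by
  set M := minTight (subsetWeight 𝓣 y) x
  have hx_eq : x = ∑ B ∈ 𝓣, fun s => if s ∈ B ∧ B ⊆ M s then y B else 0 := by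
    ext s
    rw [Finset.sum_apply, apply_eq_sum_of_mem_extremePoints hy h𝓣 hx]
  have hface : ∀ B ∈ 𝓣, ∃ t ∈ B, (fun s => if s ∈ B ∧ B ⊆ M s then y B else 0) =
      y B • Pi.single t 1 := by
    intro B hB
    by_cases hyB : y B = 0
    · obtain ⟨t, ht⟩ := h𝓣 B hB
      exact ⟨t, ht, by ext; simp [hyB]⟩
    obtain ⟨t, ht, htM⟩ := exists_subset_minTight_of_ne_zero hy h𝓣 hx hB hyB
    refine ⟨t, ht, funext fun s => ?_⟩
    by_cases hst : s = t
    · subst hst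
      simp [ht, show B ⊆ M s from htM]
    · have : ¬(s ∈ B ∧ B ⊆ M s) := fun hs => hst <| eq_of_mem_minTight_of_mem_minTight
        (subsetWeight_supermodular hy) hx (htM hs.1) (hs.2 ht)
      simp [this, hst]
  rw [hx_eq]
  refine Set.finsetSum_mem_finsetSum _ _ _ fun B hB => ?_
  obtain ⟨t, ht, hft⟩ := hface B hB
  rw [hft]
  exact Set.smul_mem_smul_set (subset_convexHull ℝ _ ⟨t, ht, rfl⟩)

theorem sum_smul_simplexFace_eq_basePolytope (hy : ∀ B ∈ 𝓣, 0 ≤ y B)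
    (h𝓣 : ∀ B ∈ 𝓣, B.Nonempty) :
    ∑ B ∈ 𝓣, y B • simplexFace B = basePolytope (subsetWeight 𝓣 y) := by
  refine (sum_smul_simplexFace_subset_basePolytope hy).antisymm ?_
  have hconv : Convex ℝ (∑ B ∈ 𝓣, y B • simplexFace B) :=
    convex_sum _ fun B _ => (convex_convexHull ℝ _).smul (y B)
  rw [← closure_convexHull_extremePoints (isCompact_basePolytope _) (convex_basePolytope _)]
  exact closure_minimal (convexHull_min
    (fun x hx => mem_sum_smul_simplexFace_of_mem_extremePoints hy h𝓣 hx) hconv)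
    (isCompact_sum_smul_simplexFace 𝓣 y).isClosed

end ExtremePoints

section Components

variable {V : Type*} {𝓑 : Finset (Finset V)} {T : Finset V}

variable (𝓑 T) in
open Classical in
noncomputable def components : Finset (Finset V) :=
  {C ∈ 𝓑 | Maximal (fun B => B ∈ 𝓑 ∧ B ⊆ T) C}

lemma mem_components {C : Finset V} :
    C ∈ components 𝓑 T ↔ Maximal (fun B => B ∈ 𝓑 ∧ B ⊆ T) C := by
  classical
  simpa [components] using fun h : Maximal (fun B => B ∈ 𝓑 ∧ B ⊆ T) C => h.prop.1

lemma exists_mem_components_superset {B : Finset V} (hB : B ∈ 𝓑) (hBT : B ⊆ T) :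
    ∃ C ∈ components 𝓑 T, B ⊆ C := by
  classical
  obtain ⟨C, hBC, hC⟩ := exists_le_maximal {B ∈ 𝓑 | B ⊆ T} (mem_filter.2 ⟨hB, hBT⟩)
  simp only [mem_filter] at hC
  exact ⟨C, mem_components.2 hC, hBC⟩

variable [DecidableEq V] (hbuild : IsBuilding (𝓑 : Set (Finset V)))
include hbuild

lemma pairwiseDisjoint_components :
    (components 𝓑 T : Set (Finset V)).PairwiseDisjoint id := by
  intro C hC C' hC' hne
  rw [mem_coe, mem_components] at hC hC'
  refine disjoint_iff_ne.2 fun a ha a' ha' haa' => hne ?_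
  have hunion : C ∪ C' ∈ 𝓑 ∧ C ∪ C' ⊆ T :=
    ⟨hbuild.2.1 C hC.prop.1 C' hC'.prop.1 ⟨a, mem_inter.2 ⟨ha, haa' ▸ ha'⟩⟩,
      union_subset hC.prop.2 hC'.prop.2⟩
  exact (hC.eq_of_le hunion subset_union_left).trans
    (hC'.eq_of_le hunion subset_union_right).symm

lemma biUnion_components : (components 𝓑 T).biUnion id = T := by
  refine subset_antisymm (biUnion_subset.2 fun C hC => (mem_components.1 hC).prop.2) fun t ht => ?_
  obtain ⟨C, hC, htC⟩ := exists_mem_components_superset (hbuild.2.2 t) (singleton_subset_iff.2 ht)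
  exact mem_biUnion.2 ⟨C, hC, singleton_subset_iff.1 htC⟩

lemma sum_le_sum_components {x : V → ℝ} {f : Finset V → ℝ}
    (hf : ∀ C ∈ 𝓑, f C ≤ ∑ t ∈ C, x t) :
    ∑ C ∈ components 𝓑 T, f C ≤ ∑ t ∈ T, x t := calc
  ∑ C ∈ components 𝓑 T, f C ≤ ∑ C ∈ components 𝓑 T, ∑ t ∈ C, x t :=
    sum_le_sum fun C hC => hf C (mem_components.1 hC).prop.1
  _ = ∑ t ∈ (components 𝓑 T).biUnion id, x t :=
    (sum_biUnion (pairwiseDisjoint_components hbuild)).symm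
  _ = ∑ t ∈ T, x t := by rw [biUnion_components hbuild]

end Components

section Paths

variable {V : Type*} [Fintype V] [DecidableEq V] {𝓑 : Finset (Finset V)}

variable (𝓑) in
def path (z : Sym2 V) : Finset V :=
  {B ∈ 𝓑 | z ∈ B.sym2}.inf id

variable (hconn : univ ∈ 𝓑) (hclosed : ∀ B ∈ 𝓑, ∀ B' ∈ 𝓑, (B ∩ B').Nonempty → B ∩ B' ∈ 𝓑)
include hconn hclosed

lemma path_mem (z : Sym2 V) : path 𝓑 z ∈ 𝓑 ∧ z ∈ (path 𝓑 z).sym2 := by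
  refine inf_mem {B | B ∈ 𝓑 ∧ z ∈ B.sym2} ⟨hconn, by simp⟩ ?_ _ _
    fun B hB => mem_filter.1 hB
  intro B hB B' hB'
  have hinter : z ∈ (B ∩ B').sym2 := mem_sym2_iff.2 fun a ha =>
    mem_inter.2 ⟨mem_sym2_iff.1 hB.2 a ha, mem_sym2_iff.1 hB'.2 a ha⟩
  exact ⟨hclosed B hB.1 B' hB'.1 ⟨_, mem_sym2_iff.1 hinter _ z.out_fst_mem⟩, hinter⟩

lemma path_subset_iff {B : Finset V} (hB : B ∈ 𝓑) {z : Sym2 V} :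
    path 𝓑 z ⊆ B ↔ z ∈ B.sym2 :=
  ⟨fun h => sym2_mono h (path_mem hconn hclosed z).2, fun h => inf_le (mem_filter.2 ⟨hB, h⟩)⟩

lemma isMinPath_iff_path_eq {s t : V} {P : Finset V} :
    IsMinPath (𝓑 : Set (Finset V)) s t P ↔ path 𝓑 s(s, t) = P := by
  obtain ⟨hpath, hst⟩ := path_mem hconn hclosed s(s, t)
  rw [mk_mem_sym2_iff] at hst
  constructor
  · rintro ⟨hP, hs, ht, hmin⟩
    exact subset_antisymm ((path_subset_iff hconn hclosed hP).2 (mk_mem_sym2_iff.2 ⟨hs, ht⟩))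
      (hmin _ hpath hst.1 hst.2)
  · rintro rfl
    exact ⟨hpath, hst.1, hst.2, fun B hB hs ht =>
      (path_subset_iff hconn hclosed hB).2 (mk_mem_sym2_iff.2 ⟨hs, ht⟩)⟩

lemma ybar_eq_card (B : Finset V) : ybar (𝓑 : Set (Finset V)) B = #{z | path 𝓑 z = B} := by
  rw [ybar, ← Set.ncard_coe_finset]
  congr 1
  ext z
  induction z using Sym2.ind with
  | _ a b =>
    simp only [Set.mem_ofPred_eq, coe_filter, mem_univ, true_and,
      isMinPath_iff_path_eq hconn hclosed]
    exact ⟨fun ⟨s, t, hz, hP⟩ => hz ▸ hP, fun h => ⟨a, b, rfl, h⟩⟩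

lemma subsetWeight_ybar (T : Finset V) :
    subsetWeight 𝓑 (fun B => (ybar (𝓑 : Set (Finset V)) B : ℝ)) T = #{z | path 𝓑 z ⊆ T} := by
  have hmaps : Set.MapsTo (path 𝓑) (({z | path 𝓑 z ⊆ T} : Finset (Sym2 V)) : Set (Sym2 V))
      ({B ∈ 𝓑 | B ⊆ T} : Finset (Finset V)) := fun z hz =>
    mem_filter.2 ⟨(path_mem hconn hclosed z).1, (mem_filter.1 hz).2⟩
  rw [subsetWeight, ← Nat.cast_sum, card_eq_sum_card_fiberwise hmaps]
  refine congrArg _ (sum_congr rfl fun B hB => ?_)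
  rw [ybar_eq_card hconn hclosed, filter_filter]
  congr 1
  ext z
  simp only [mem_filter, mem_univ, true_and]
  exact ⟨fun h => ⟨h ▸ (mem_filter.1 hB).2, h⟩, And.right⟩

lemma card_path_subset_of_mem {B : Finset V} (hB : B ∈ 𝓑) :
    #{z | path 𝓑 z ⊆ B} = (#B + 1).choose 2 := by
  rw [← card_sym2]
  congr 1
  ext z
  simp [path_subset_iff hconn hclosed hB]

lemma card_path_subset_le (T : Finset V) :
    #{z | path 𝓑 z ⊆ T} ≤ ∑ C ∈ components 𝓑 T, (#C + 1).choose 2 := by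
  simp only [← card_sym2]
  refine (card_le_card fun z hz => ?_).trans card_biUnion_le
  obtain ⟨hpath, hz_path⟩ := path_mem hconn hclosed z
  obtain ⟨C, hC, hsub⟩ := exists_mem_components_superset hpath (mem_filter.1 hz).2
  exact mem_biUnion.2 ⟨C, hC, sym2_mono hsub hz_path⟩

end Paths

theorem remo_eq_basePolytope {V : Type*} [Fintype V] [DecidableEq V] {𝓑 : Finset (Finset V)}
    (hbuild : IsBuilding (𝓑 : Set (Finset V))) (hconn : univ ∈ 𝓑)
    (hclosed : ∀ B ∈ 𝓑, ∀ B' ∈ 𝓑, (B ∩ B').Nonempty → B ∩ B' ∈ 𝓑) :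
    Remo (𝓑 : Set (Finset V)) =
      basePolytope (subsetWeight 𝓑 fun B => (ybar (𝓑 : Set (Finset V)) B : ℝ)) := by
  have hweight {B} (hB : B ∈ 𝓑) :
      subsetWeight 𝓑 (fun B => (ybar (𝓑 : Set (Finset V)) B : ℝ)) B = (#B + 1).choose 2 := by
    rw [subsetWeight_ybar hconn hclosed, card_path_subset_of_mem hconn hclosed hB]
  ext x
  refine ⟨fun hx => ⟨?_, fun T => ?_⟩, fun hx => ⟨?_, fun B hB => ?_⟩⟩
  · rw [hweight hconn, card_univ, hx.1]
  · rw [subsetWeight_ybar hconn hclosed]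
    refine le_trans ?_ (sum_le_sum_components hbuild hx.2)
    exact_mod_cast card_path_subset_le hconn hclosed T
  · rw [hx.1, hweight hconn, card_univ]
  · rw [← hweight hB]
    exact hx.2 B

/-- For a connected building set `𝓑` closed under intersection, the
removahedron `Remo(𝓑)` coincides with the Minkowski sum `Σ_{B ∈ 𝓑} ȳ_B Δ_B`
of dilated faces of the standard simplex. -/
theorem remo_eq_minkowski_sum {V : Type*} [Fintype V] [DecidableEq V]
    (𝓑 : Finset (Finset V)) (hbuild : IsBuilding (𝓑 : Set (Finset V)))
    (hconn : (Finset.univ : Finset V) ∈ 𝓑)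
    (hclosed : ∀ B ∈ 𝓑, ∀ B' ∈ 𝓑, (B ∩ B').Nonempty → B ∩ B' ∈ 𝓑) :
    Remo (𝓑 : Set (Finset V)) =
      ∑ B ∈ 𝓑, (ybar (𝓑 : Set (Finset V)) B : ℝ) • simplexFace B := by
  rw [remo_eq_basePolytope hbuild hconn hclosed,
    sum_smul_simplexFace_eq_basePolytope (fun B _ => Nat.cast_nonneg _) hbuild.1]
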